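/- Let f : X → Y be a bornologous function between extended metric spaces. Then f is a large scale isomorphism (there exists a bornologous β : Y → X with f∘β ~ls id_Y and β∘f ~ls id_X) if and only if for every graph G (with its graph metric) and every Lipschitz function h : G → Y there exists a Lipschitz function h' : G → X with f∘h' ~ls h, and this lift is unique up to ls-equivalence: if h'' : G → X is Lipschitz with f∘h'' ~ls h, then h'' ~ls h'. -/

import Mathlib

open scoped ENNReal NNReal

/-- A function between extended metric spaces is bornologous if for every `t > 0`
there is `s > 0` such that `d(x,y) < t` implies `d(α x, α y) < s`. -/
def Bornologous {X : Type u} {Y : Type v} [EMetricSpace X] [EMetricSpace Y]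
    (α : X → Y) : Prop :=
  ∀ t : ℝ, 0 < t → ∃ s : ℝ, 0 < s ∧ ∀ x y : X,
    edist x y < ENNReal.ofReal t → edist (α x) (α y) < ENNReal.ofReal s

/-- `f ~ls g` : two functions into an extended metric space are ls-equivalent if they
are within finite distance from each other. -/
def LSEquiv {Z : Type w} {X : Type u} [EMetricSpace X] (f g : Z → X) : Prop :=
  (⨆ z : Z, edist (f z) (g z)) < ⊤

/-- A function from the vertex set of a graph (with its graph metric) to an extended
metric space is Lipschitz if there is `L < ∞` with `d(g v, g w) ≤ L · d_G(v,w)`. -/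
def GraphLipschitz {V : Type w} {X : Type u} [EMetricSpace X]
    (G : SimpleGraph V) (g : V → X) : Prop :=
  ∃ L : ℝ≥0, ∀ v w : V, edist (g v) (g w) ≤ (L : ℝ≥0∞) * (G.edist v w : ℝ≥0∞)

/-!
For `⇒`, a coarse inverse `β` lifts `h` to `β ∘ h`, and any other lift `h''` satisfies
`h'' ~ β ∘ f ∘ h'' ~ β ∘ h`. For `⇐`, lifting `id : Y → Y` along the edgeless graph on `Y`
gives a candidate `β`; uniqueness of lifts of `f` along the edgeless graph on `X` forces
`β ∘ f ~ id`. Lifting `id` along the Rips graph of `Y` at scale `B` gives a map that is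
ls-equivalent to `β` (by uniqueness along the edgeless graph) and moves `B`-close points
boundedly far apart, so `β` is bornologous.
-/

variable {X : Type u} {Y : Type v} {Z : Type w} {V : Type w'} [EMetricSpace X] [EMetricSpace Y]

theorem lsEquiv_iff_exists_edist_le {f g : Z → X} :
    LSEquiv f g ↔ ∃ C : ℝ≥0, ∀ z, edist (f z) (g z) ≤ C := by
  constructor
  · intro h
    refine ⟨(⨆ z, edist (f z) (g z)).toNNReal, fun z => ?_⟩
    rw [ENNReal.coe_toNNReal h.ne]
    exact le_iSup (fun z => edist (f z) (g z)) z
  · rintro ⟨C, hC⟩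
    exact (iSup_le hC).trans_lt ENNReal.coe_lt_top

namespace LSEquiv

theorem refl (f : Z → X) : LSEquiv f f :=
  lsEquiv_iff_exists_edist_le.2 ⟨0, fun z => by simp⟩

theorem symm {f g : Z → X} (h : LSEquiv f g) : LSEquiv g f := by
  obtain ⟨C, hC⟩ := lsEquiv_iff_exists_edist_le.1 h
  exact lsEquiv_iff_exists_edist_le.2 ⟨C, fun z => edist_comm (g z) (f z) ▸ hC z⟩

theorem trans {f g k : Z → X} (hfg : LSEquiv f g) (hgk : LSEquiv g k) : LSEquiv f k := by
  obtain ⟨C₁, hC₁⟩ := lsEquiv_iff_exists_edist_le.1 hfg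
  obtain ⟨C₂, hC₂⟩ := lsEquiv_iff_exists_edist_le.1 hgk
  refine lsEquiv_iff_exists_edist_le.2 ⟨C₁ + C₂, fun z => ?_⟩
  calc edist (f z) (k z) ≤ edist (f z) (g z) + edist (g z) (k z) := edist_triangle _ _ _
    _ ≤ C₁ + C₂ := add_le_add (hC₁ z) (hC₂ z)

theorem comp_right {f g : Z → X} (h : LSEquiv f g) (k : V → Z) :
    LSEquiv (fun v => f (k v)) (fun v => g (k v)) :=
  (iSup_le fun v => le_iSup (fun z => edist (f z) (g z)) (k v)).trans_lt h

end LSEquiv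

def ControlledAtScale (α : X → Y) (B : ℝ≥0) : Prop :=
  ∃ S : ℝ≥0, ∀ x y, edist x y ≤ B → edist (α x) (α y) ≤ S

theorem bornologous_iff_forall_controlledAtScale {α : X → Y} :
    Bornologous α ↔ ∀ B : ℝ≥0, ControlledAtScale α B := by
  constructor
  · intro hα B
    obtain ⟨s, -, hs⟩ := hα (B + 1) (by positivity)
    refine ⟨s.toNNReal, fun x y hxy => (hs x y ?_).le⟩
    calc edist x y ≤ B := hxy
      _ < ENNReal.ofReal (B + 1) := by
        rw [← ENNReal.ofReal_coe_nnreal, ENNReal.ofReal_lt_ofReal_iff (by positivity)]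
        exact lt_add_one _
  · intro hα t ht
    obtain ⟨S, hS⟩ := hα t.toNNReal
    refine ⟨S + 1, by positivity, fun x y hxy => ?_⟩
    calc edist (α x) (α y) ≤ S := hS x y hxy.le
      _ < ENNReal.ofReal (S + 1) := by
        rw [← ENNReal.ofReal_coe_nnreal, ENNReal.ofReal_lt_ofReal_iff (by positivity)]
        exact lt_add_one _

theorem ControlledAtScale.of_lsEquiv {k α : X → Y} {B : ℝ≥0} (hk : ControlledAtScale k B)
    (hkα : LSEquiv k α) : ControlledAtScale α B := by
  obtain ⟨S, hS⟩ := hk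
  obtain ⟨C, hC⟩ := lsEquiv_iff_exists_edist_le.1 hkα
  refine ⟨C + S + C, fun x y hxy => ?_⟩
  calc edist (α x) (α y) ≤ edist (α x) (k x) + edist (k x) (k y) + edist (k y) (α y) :=
        edist_triangle4 _ _ _ _
    _ ≤ C + S + C := by
      gcongr
      · exact edist_comm (α x) (k x) ▸ hC x
      · exact hS x y hxy
      · exact hC y

theorem Bornologous.lsEquiv_comp {α : X → Y} (hα : Bornologous α) {f g : Z → X}
    (h : LSEquiv f g) : LSEquiv (fun z => α (f z)) (fun z => α (g z)) := by
  obtain ⟨C, hC⟩ := lsEquiv_iff_exists_edist_le.1 h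
  obtain ⟨S, hS⟩ := bornologous_iff_forall_controlledAtScale.1 hα C
  exact lsEquiv_iff_exists_edist_le.2 ⟨S, fun z => hS _ _ (hC z)⟩

theorem edist_le_mul_walk_length {G : SimpleGraph V} {g : V → X} {B : ℝ≥0∞}
    (hB : ∀ a b, G.Adj a b → edist (g a) (g b) ≤ B) {v w : V} (p : G.Walk v w) :
    edist (g v) (g w) ≤ B * p.length := by
  induction p with
  | nil => simp
  | @cons u a w hua p ih =>
    calc edist (g u) (g w) ≤ edist (g u) (g a) + edist (g a) (g w) := edist_triangle _ _ _
      _ ≤ B + B * p.length := add_le_add (hB _ _ hua) ih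
      _ = B * (p.cons hua).length := by
        rw [SimpleGraph.Walk.length_cons]; push_cast; ring

theorem graphLipschitz_iff_forall_adj {G : SimpleGraph V} {g : V → X} :
    GraphLipschitz G g ↔ ∃ L : ℝ≥0, ∀ a b, G.Adj a b → edist (g a) (g b) ≤ L := by
  constructor
  · rintro ⟨L, hL⟩
    refine ⟨L, fun a b hab => ?_⟩
    simpa [SimpleGraph.edist_eq_one_iff_adj.2 hab] using hL a b
  · rintro ⟨L, hL⟩
    refine ⟨L + 1, fun v w => ?_⟩
    obtain hvw | hvw := eq_or_ne (G.edist v w) ⊤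
    · simp [hvw, ENNReal.mul_top]
    obtain ⟨p, hp⟩ := SimpleGraph.exists_walk_of_edist_ne_top hvw
    calc edist (g v) (g w) ≤ L * p.length := edist_le_mul_walk_length hL p
      _ ≤ ((L + 1 : ℝ≥0) : ℝ≥0∞) * (G.edist v w : ℝ≥0∞) := by
        rw [← hp]; push_cast; gcongr; exact le_self_add

theorem graphLipschitz_bot (g : V → X) : GraphLipschitz (⊥ : SimpleGraph V) g :=
  graphLipschitz_iff_forall_adj.2 ⟨0, fun _ _ hab => hab.elim⟩

theorem Bornologous.graphLipschitz_comp {β : X → Y} (hβ : Bornologous β) {G : SimpleGraph V}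
    {h : V → X} (hh : GraphLipschitz G h) : GraphLipschitz G (fun v => β (h v)) := by
  obtain ⟨L, hL⟩ := graphLipschitz_iff_forall_adj.1 hh
  obtain ⟨S, hS⟩ := bornologous_iff_forall_controlledAtScale.1 hβ L
  exact graphLipschitz_iff_forall_adj.2 ⟨S, fun a b hab => hS _ _ (hL a b hab)⟩

def ripsGraph (X : Type u) [EMetricSpace X] (B : ℝ≥0) : SimpleGraph X :=
  SimpleGraph.fromRel fun x y => edist x y ≤ B

theorem ripsGraph_adj {B : ℝ≥0} {x y : X} :
    (ripsGraph X B).Adj x y ↔ x ≠ y ∧ edist x y ≤ B := by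
  simp [ripsGraph, edist_comm y x]

theorem graphLipschitz_ripsGraph_id (B : ℝ≥0) : GraphLipschitz (ripsGraph X B) id :=
  graphLipschitz_iff_forall_adj.2 ⟨B, fun _ _ hxy => (ripsGraph_adj.1 hxy).2⟩

theorem GraphLipschitz.controlledAtScale {B : ℝ≥0} {k : X → Y}
    (hk : GraphLipschitz (ripsGraph X B) k) : ControlledAtScale k B := by
  obtain ⟨L, hL⟩ := graphLipschitz_iff_forall_adj.1 hk
  refine ⟨L, fun x y hxy => ?_⟩
  obtain rfl | hne := eq_or_ne x y
  · simp
  · exact hL x y (ripsGraph_adj.2 ⟨hne, hxy⟩)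

theorem largeScaleIsomorphism_iff_lifting_general {X Y : Type u}
    [EMetricSpace X] [EMetricSpace Y] (f : X → Y) :
    (∃ β : Y → X, Bornologous β ∧
        LSEquiv (fun y => f (β y)) (fun y => y) ∧
        LSEquiv (fun x => β (f x)) (fun x => x)) ↔
    (∀ (V : Type u) (G : SimpleGraph V) (h : V → Y), GraphLipschitz G h →
        ∃ h' : V → X, GraphLipschitz G h' ∧ LSEquiv (fun v => f (h' v)) h ∧
          ∀ h'' : V → X, GraphLipschitz G h'' →
            LSEquiv (fun v => f (h'' v)) h → LSEquiv h'' h') := by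
  constructor
  · rintro ⟨β, hβ, hfβ, hβf⟩ V G h hh
    refine ⟨fun v => β (h v), hβ.graphLipschitz_comp hh, hfβ.comp_right h, fun h'' _ hfh'' => ?_⟩
    exact (hβf.comp_right h'').symm.trans (hβ.lsEquiv_comp hfh'')
  · intro lift
    obtain ⟨β, -, hfβ, β_unique⟩ := lift Y ⊥ id (graphLipschitz_bot id)
    obtain ⟨k, -, -, k_unique⟩ := lift X ⊥ f (graphLipschitz_bot f)
    have hβf : LSEquiv (fun x => β (f x)) (fun x => x) :=
      (k_unique _ (graphLipschitz_bot _) (hfβ.comp_right f)).trans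
        (k_unique id (graphLipschitz_bot id) (LSEquiv.refl f)).symm
    refine ⟨β, bornologous_iff_forall_controlledAtScale.2 fun B => ?_, hfβ, hβf⟩
    obtain ⟨kB, hkB, hfkB, -⟩ := lift Y (ripsGraph Y B) id (graphLipschitz_ripsGraph_id B)
    exact hkB.controlledAtScale.of_lsEquiv (β_unique kB (graphLipschitz_bot kB) hfkB)

/-- a bornologous `f : X → Y` is a large scale isomorphism (has a
bornologous coarse inverse) iff every Lipschitz map `h` from a graph to `Y` lifts,
uniquely up to ls-equivalence, to a Lipschitz map to `X`. -/
theorem largeScaleIsomorphism_iff_lifting {X Y : Type u}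
    [EMetricSpace X] [EMetricSpace Y] (f : X → Y) (hf : Bornologous f) :
    (∃ β : Y → X, Bornologous β ∧
        LSEquiv (fun y => f (β y)) (fun y => y) ∧
        LSEquiv (fun x => β (f x)) (fun x => x)) ↔
    (∀ (V : Type u) (G : SimpleGraph V) (h : V → Y), GraphLipschitz G h →
        ∃ h' : V → X, GraphLipschitz G h' ∧ LSEquiv (fun v => f (h' v)) h ∧
          ∀ h'' : V → X, GraphLipschitz G h'' →
            LSEquiv (fun v => f (h'' v)) h → LSEquiv h'' h') :=
  largeScaleIsomorphism_iff_lifting_general f
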